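/- Let S be a commutative Noetherian ring, M an S-module, and x ∈ S a non-zerodivisor on both S and M. If M → I is a minimal injective resolution of M, then the canonical induced map M/xM → Σ^1 Hom_S(S/xS, I) is a minimal injective resolution of the S/xS-module M/xM. -/

import Mathlib

open CategoryTheory CategoryTheory.Limits

universe u

variable (R : Type u) [CommRing R]

/-- The `a`-torsion submodule `Γ_a(M) = {x ∈ M | aⁿ x = 0 for some n}`. -/
def aTorsion (a : Ideal R) (M : Type u) [AddCommGroup M] [Module R M] : Submodule R M where
  carrier := {x | ∃ n : ℕ, ∀ r ∈ a ^ n, r • x = 0}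
  zero_mem' := ⟨0, fun r _ => smul_zero r⟩
  add_mem' := by
    intro x y hx hy
    obtain ⟨n, hn⟩ := hx
    obtain ⟨m, hm⟩ := hy
    exact ⟨n + m, fun r hr => by
      rw [smul_add, hn r (Ideal.pow_le_pow_right (Nat.le_add_right n m) hr),
        hm r (Ideal.pow_le_pow_right (Nat.le_add_left m n) hr), add_zero]⟩
  smul_mem' := by
    intro c x hx
    obtain ⟨n, hn⟩ := hx
    exact ⟨n, fun r hr => by rw [smul_comm, hn r hr, smul_zero]⟩

/-- Functoriality of the `a`-torsion submodule. -/
def aTorsionMap (a : Ideal R) {M N : Type u} [AddCommGroup M] [Module R M]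
    [AddCommGroup N] [Module R N] (f : M →ₗ[R] N) :
    aTorsion R a M →ₗ[R] aTorsion R a N :=
  f.restrict (p := aTorsion R a M) (q := aTorsion R a N) (fun x hx => by
    obtain ⟨n, hn⟩ := hx
    exact ⟨n, fun r hr => by rw [← map_smul, hn r hr, map_zero]⟩)

/-- The `a`-torsion functor `Γ_a : Mod R → Mod R`. -/
def torsionFunctor (a : Ideal R) : ModuleCat.{u} R ⥤ ModuleCat.{u} R where
  obj M := ModuleCat.of R (aTorsion R a M)
  map f := ModuleCat.ofHom (aTorsionMap R a f.hom)
  map_id := by intros; ext; rfl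
  map_comp := by intros; ext; rfl

instance (a : Ideal R) : (torsionFunctor R a).Additive where
  map_add := by intros; ext x; rfl

/-- The `a`-torsion functor applied degreewise to a cochain complex. -/
def torsionCpx (a : Ideal R) (U : CochainComplex (ModuleCat.{u} R) ℤ) :
    CochainComplex (ModuleCat.{u} R) ℤ :=
  ((torsionFunctor R a).mapHomologicalComplex (ComplexShape.up ℤ)).obj U


/-- A totally acyclic complex of injective modules. -/
structure IsTotallyAcyclicInjCpx (U : CochainComplex (ModuleCat.{u} R) ℤ) : Prop where
  inj : ∀ i : ℤ, Injective (U.X i)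
  acyclic : ∀ i : ℤ, U.ExactAt i
  hom_acyclic : ∀ (J : ModuleCat.{u} R), Injective J → ∀ (i : ℤ) (g : J ⟶ U.X i),
    g ≫ U.d i (i + 1) = 0 → ∃ h : J ⟶ U.X (i - 1), h ≫ U.d (i - 1) i = g

/-- `ι : M ⟶ I.X 0` is an injective resolution of `M` (with `I` a ℤ-indexed cochain
complex vanishing in negative degrees). -/
structure IsInjRes (M : ModuleCat.{u} R) (I : CochainComplex (ModuleCat.{u} R) ℤ)
    (ι : M ⟶ I.X 0) : Prop where
  inj : ∀ i : ℤ, Injective (I.X i)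
  zero_neg : ∀ i < (0 : ℤ), IsZero (I.X i)
  mono : Function.Injective ι
  exact_zero : LinearMap.range ι.hom = LinearMap.ker (I.d 0 1).hom
  exact_pos : ∀ i > (0 : ℤ), I.ExactAt i

/-- A complete injective resolution of `M`. -/
structure IsCompleteInjRes (M : ModuleCat.{u} R) (I U : CochainComplex (ModuleCat.{u} R) ℤ)
    (ι : M ⟶ I.X 0) (ν : I ⟶ U) : Prop where
  res : IsInjRes R M I ι
  totAcyclic : IsTotallyAcyclicInjCpx R U
  iso_ge : ∃ n : ℤ, ∀ i ≥ n, IsIso (ν.f i)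

/-- A complex is minimal if every self homotopy equivalence is an isomorphism. -/
def IsMinimalCpx (C : CochainComplex (ModuleCat.{u} R) ℤ) : Prop :=
  ∀ e : HomotopyEquiv C C, IsIso e.hom

/-- The data of a minimal complete injective resolution of `M`. -/
structure MinCIR (M : ModuleCat.{u} R) where
  I : CochainComplex (ModuleCat.{u} R) ℤ
  U : CochainComplex (ModuleCat.{u} R) ℤ
  ι : M ⟶ I.X 0
  ν : I ⟶ U
  complete : IsCompleteInjRes R M I U ι ν
  minI : IsMinimalCpx R I
  minU : IsMinimalCpx R U

/-- The stable local cohomology module `Γ^stab_a(M) = Z⁰(Γ_a(U))` computed from a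
totally acyclic complex `U` (the complete injective resolution of `M`). -/
def stabLC (a : Ideal R) (U : CochainComplex (ModuleCat.{u} R) ℤ) : ModuleCat.{u} R :=
  ModuleCat.of R (LinearMap.ker ((torsionCpx R a U).d 0 1).hom)

/-- A Gorenstein injective module: a cycle of a totally acyclic complex of injectives. -/
def GorensteinInjective (G : ModuleCat.{u} R) : Prop :=
  ∃ U : CochainComplex (ModuleCat.{u} R) ℤ, IsTotallyAcyclicInjCpx R U ∧
    Nonempty (G ≃ₗ[R] LinearMap.ker (U.d 0 1).hom)

/-- Isomorphism in the stable category of Gorenstein injective modules: `X ⊕ J₁ ≅ Y ⊕ J₂`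
for some injective modules `J₁`, `J₂`. -/
def StablyIsomorphic (X Y : ModuleCat.{u} R) : Prop :=
  ∃ J₁ J₂ : ModuleCat.{u} R, Injective J₁ ∧ Injective J₂ ∧
    Nonempty ((X × J₁) ≃ₗ[R] (Y × J₂))

/-- `M` has injective dimension at most `n`. -/
def InjDimLE (M : ModuleCat.{u} R) (n : ℕ) : Prop :=
  ∃ (I : CochainComplex (ModuleCat.{u} R) ℤ) (ι : M ⟶ I.X 0),
    IsInjRes R M I ι ∧ ∀ i : ℤ, i > (n : ℤ) → IsZero (I.X i)

/-- `M` has finite injective dimension. -/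
def FiniteInjDim (M : ModuleCat.{u} R) : Prop := ∃ n : ℕ, InjDimLE R M n

/-- A Gorenstein ring: commutative Noetherian and every localization at a prime has finite
self-injective dimension. -/
def IsGorensteinRing : Prop :=
  IsNoetherianRing R ∧ ∀ (p : Ideal R) (hp : p.IsPrime),
    haveI := hp
    FiniteInjDim (Localization.AtPrime p)
      (ModuleCat.of (Localization.AtPrime p) (Localization.AtPrime p))

section Stmt14

variable (S : Type u) [CommRing S]

/-- A submodule is essential if it meets every nonzero submodule. -/
def IsEssentialSub {N : Type u} [AddCommGroup N] [Module S N] (Z : Submodule S N) : Prop :=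
  ∀ W : Submodule S N, W ≠ ⊥ → W ⊓ Z ≠ ⊥

/-- A minimal injective resolution: an injective resolution in which each term is an
injective hull of its cycles. -/
structure IsMinInjRes (M : ModuleCat.{u} S) (I : CochainComplex (ModuleCat.{u} S) ℤ)
    (ι : M ⟶ I.X 0) : Prop where
  res : IsInjRes S M I ι
  ess : ∀ i : ℤ, 0 ≤ i →
    IsEssentialSub S (LinearMap.ker (I.d i (i + 1)).hom : Submodule S (I.X i))

/-- `N` (an `S`-module killed by `x`) is injective as an `S/(x)`-module. -/
def QuotInjModule (x : S) (N : Type u) [AddCommGroup N] [Module S N]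
    (hN : Module.IsTorsionBy S N x) : Prop :=
  letI : Module (S ⧸ Ideal.span {x}) N :=
    ((Module.isTorsionBySet_iff_is_torsion_by_span ({x} : Set S)).mp
      ((Module.isTorsionBySet_singleton_iff x).mpr hN)).module
  Module.Injective (S ⧸ Ideal.span {x}) N

/-- The degree-`i` term of `Σ¹ Hom_S(S/xS, I)`, realized as the `x`-torsion elements of
`I^{i+1}`. -/
noncomputable def xTorsCpxX (x : S) (I : CochainComplex (ModuleCat.{u} S) ℤ) (i : ℤ) :
    Submodule S (I.X (i + 1)) :=
  Submodule.torsionBy S (I.X (i + 1)) x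

/-- The differential of `Σ¹ Hom_S(S/xS, I)` (restriction of the differential of `I`). -/
noncomputable def xTorsCpxD (x : S) (I : CochainComplex (ModuleCat.{u} S) ℤ) (i : ℤ) :
    (xTorsCpxX S x I i) →ₗ[S] (xTorsCpxX S x I (i + 1)) :=
  ((I.d (i + 1) (i + 1 + 1)).hom : I.X (i + 1) →ₗ[S] I.X (i + 1 + 1)).restrict
    (p := xTorsCpxX S x I i) (q := xTorsCpxX S x I (i + 1)) (fun u hu => by
      have hu' : x • u = 0 := (Submodule.mem_torsionBy_iff x u).mp hu
      refine (Submodule.mem_torsionBy_iff x _).mpr ?_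
      rw [← map_smul, hu', map_zero])

end Stmt14

/-! Multiplication by the non-zerodivisor `x` is surjective on every injective module, and the
`x`-torsion `Hom_S(S/xS, J)` of an injective `J` is an injective `S/xS`-module by Baer's criterion.
Applied to `I`, divisibility makes every `x`-torsion cycle of degree `≥ 1` a boundary of an
`x`-torsion element, while in degree `0` the relation `x • u = ι m` identifies `M/xM` with the
cycles. Minimality survives because an essential submodule meets every submodule of the
ambient module essentially. -/

namespace Module.Injective

variable {S : Type u} [CommRing S] {Q : Type v} [AddCommGroup Q] [Module S Q] [Small.{v} S]
  [Module.Injective S Q]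

theorem exists_smul_eq {x : S} (hx : x ∈ nonZeroDivisors S) (t : Q) : ∃ s : Q, x • s = t := by
  have hmul : Function.Injective (LinearMap.lsmul S S x) := fun a b hab =>
    (mul_cancel_left_mem_nonZeroDivisors hx).mp hab
  obtain ⟨g, hg⟩ := extension_property S Q S S _ hmul (LinearMap.toSpanSingleton S Q t)
  refine ⟨g 1, ?_⟩
  simpa [← map_smul] using LinearMap.congr_fun hg 1

instance torsionBy_quotient (a : S) :
    Module.Injective (S ⧸ Ideal.span {a}) (Submodule.torsionBy S Q a) := by
  refine Module.Baer.injective fun J f => ?_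
  let Jc : Ideal S := J.comap (Ideal.Quotient.mk _)
  let fS : Jc →ₗ[S] Q := (Submodule.torsionBy S Q a).subtype ∘ₗ (f.restrictScalars S) ∘ₗ
    (Ideal.Quotient.mkₐ S (Ideal.span {a})).toLinearMap.restrict (p := Jc)
      (q := J.restrictScalars S) fun _ h => h
  obtain ⟨g, hg⟩ := Module.Baer.of_injective ‹_› Jc fS
  -- `a ∈ Jc` is sent to `0`, so `g 1` is `a`-torsion and spans the required extension.
  have ha : a ∈ Jc := by simp [Jc]
  have hg1 : g 1 ∈ Submodule.torsionBy S Q a := by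
    rw [Submodule.mem_torsionBy_iff, ← map_smul, smul_eq_mul, mul_one, hg a ha]
    have h0 : (⟨Ideal.Quotient.mk _ a, ha⟩ : J) = 0 :=
      Subtype.ext (Ideal.Quotient.eq_zero_iff_mem.mpr (Ideal.mem_span_singleton_self a))
    change ((f ⟨Ideal.Quotient.mk _ a, ha⟩ : Submodule.torsionBy S Q a) : Q) = 0
    rw [h0, map_zero, ZeroMemClass.coe_zero]
  refine ⟨LinearMap.toSpanSingleton _ _ ⟨g 1, hg1⟩, fun z hz => ?_⟩
  obtain ⟨s, rfl⟩ := Ideal.Quotient.mk_surjective z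
  refine Subtype.ext ?_
  change s • g 1 = ((f ⟨Ideal.Quotient.mk _ s, hz⟩ : Submodule.torsionBy S Q a) : Q)
  rw [← map_smul, smul_eq_mul, mul_one]
  exact hg s hz

end Module.Injective

theorem ModuleCat.exists_smul_eq_of_injective {S : Type u} [CommRing S] {x : S}
    (hx : x ∈ nonZeroDivisors S) {X : ModuleCat.{u} S} [Injective X] (t : X) :
    ∃ s : X, x • s = t :=
  have := Module.injective_module_of_injective_object S X
  Module.Injective.exists_smul_eq hx t

section CochainComplex

variable {S : Type u} [CommRing S] (I : CochainComplex (ModuleCat.{u} S) ℤ)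

theorem CochainComplex.d_apply_d_apply (i j k : ℤ) (v : I.X i) : I.d j k (I.d i j v) = 0 := by
  simp [← ModuleCat.comp_apply]

theorem CochainComplex.exists_d_eq_of_exactAt {i : ℤ} (h : I.ExactAt (i + 1)) (v : I.X (i + 1))
    (hv : I.d (i + 1) (i + 1 + 1) v = 0) : ∃ u : I.X i, I.d i (i + 1) u = v := by
  rw [I.exactAt_iff' i (i + 1) (i + 1 + 1) (by simp) (by simp),
    ShortComplex.moduleCat_exact_iff] at h
  exact h v hv

end CochainComplex

section XTorsionComplex

variable {S : Type u} [CommRing S] {x : S} {I : CochainComplex (ModuleCat.{u} S) ℤ}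

@[simp]
theorem coe_xTorsCpxD_apply (i : ℤ) (v : xTorsCpxX S x I i) :
    (xTorsCpxD S x I i v : I.X (i + 1 + 1)) = I.d (i + 1) (i + 1 + 1) v :=
  rfl

theorem mem_xTorsCpxX_iff {i : ℤ} {v : I.X (i + 1)} : v ∈ xTorsCpxX S x I i ↔ x • v = 0 :=
  Submodule.mem_torsionBy_iff x v

theorem xTorsCpxD_comp_xTorsCpxD (i : ℤ) :
    xTorsCpxD S x I (i + 1) ∘ₗ xTorsCpxD S x I i = 0 := by
  ext v
  exact I.d_apply_d_apply _ _ _ _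

/-- If `d u = v` with `x • v = 0`, then `x • u` is a cycle, hence `x • u = d (x • s)` by
divisibility of `I^i`, and `u - d s` is an `x`-torsion preimage of `v`. -/
theorem range_xTorsCpxD_eq_ker (hx : x ∈ nonZeroDivisors S) {i : ℤ}
    [Injective (I.X i)] (h₁ : I.ExactAt (i + 1)) (h₂ : I.ExactAt (i + 1 + 1)) :
    LinearMap.range (xTorsCpxD S x I i) = LinearMap.ker (xTorsCpxD S x I (i + 1)) := by
  refine le_antisymm (LinearMap.range_le_ker_iff.mpr (xTorsCpxD_comp_xTorsCpxD i))
    fun v hv => ?_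
  obtain ⟨u, hu⟩ := I.exists_d_eq_of_exactAt h₂ v (congrArg Subtype.val hv)
  have hxu : I.d (i + 1) (i + 1 + 1) (x • u) = 0 := by
    rw [map_smul, hu]
    exact mem_xTorsCpxX_iff.mp v.2
  obtain ⟨t, ht⟩ := I.exists_d_eq_of_exactAt h₁ _ hxu
  obtain ⟨s, rfl⟩ := ModuleCat.exists_smul_eq_of_injective hx t
  have hw : x • (u - I.d i (i + 1) s) = 0 := by
    rw [smul_sub, ← map_smul, ht, sub_self]
  refine ⟨⟨u - I.d i (i + 1) s, mem_xTorsCpxX_iff.mpr hw⟩, Subtype.ext ?_⟩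
  simp [hu, I.d_apply_d_apply]

theorem ker_xTorsCpxD (i : ℤ) : LinearMap.ker (xTorsCpxD S x I i) =
    (LinearMap.ker (I.d (i + 1) (i + 1 + 1)).hom).comap (xTorsCpxX S x I i).subtype := by
  ext v
  simp [Subtype.ext_iff]

end XTorsionComplex

theorem IsEssentialSub.comap_subtype {S : Type u} [CommRing S] {N : Type u} [AddCommGroup N]
    [Module S N] {Z : Submodule S N} (hZ : IsEssentialSub S Z) (T : Submodule S N) :
    IsEssentialSub S (Z.comap T.subtype) := by
  intro W hW
  have hW' : W.map T.subtype ≠ ⊥ := by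
    simpa using (Submodule.map_injective_of_injective T.subtype_injective).ne hW
  obtain ⟨_, ⟨⟨w, hwW, rfl⟩, hwZ⟩, hw0⟩ := (Submodule.ne_bot_iff _).mp (hZ _ hW')
  exact (Submodule.ne_bot_iff _).mpr ⟨w, ⟨hwW, hwZ⟩, fun h => hw0 (by simp [h])⟩

namespace IsInjRes

variable {S : Type u} [CommRing S] {x : S} {M : Type u} [AddCommGroup M] [Module S M]
  {I : CochainComplex (ModuleCat.{u} S) ℤ} {ι : ModuleCat.of S M ⟶ I.X 0}
  {θ : (M ⧸ (Ideal.span {x} • (⊤ : Submodule S M))) →ₗ[S] xTorsCpxX S x I 0}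

theorem connecting_injective (hI : IsInjRes S (ModuleCat.of S M) I ι)
    (hx : x ∈ nonZeroDivisors S)
    (hθ : ∀ (m : M) (u : I.X 0), x • u = ι m →
      ((θ (Submodule.Quotient.mk m) : I.X (0 + 1)) = I.d 0 1 u)) :
    Function.Injective θ := by
  have := hI.inj 0
  refine (injective_iff_map_eq_zero θ).mpr fun a ha => ?_
  obtain ⟨m, rfl⟩ := Submodule.Quotient.mk_surjective _ a
  obtain ⟨u, hu⟩ := ModuleCat.exists_smul_eq_of_injective hx (ι m)
  have hdu : u ∈ LinearMap.ker (I.d 0 1).hom := by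
    simpa [ha] using (hθ m u hu).symm
  rw [← hI.exact_zero] at hdu
  obtain ⟨m', hm'⟩ := hdu
  have hm : x • m' = m := hI.mono (by simp [hm', hu])
  rw [Submodule.Quotient.mk_eq_zero, ← hm]
  exact Submodule.smul_mem_smul (Ideal.mem_span_singleton_self x) trivial

theorem range_connecting_eq_ker (hI : IsInjRes S (ModuleCat.of S M) I ι)
    (hx : x ∈ nonZeroDivisors S)
    (hθ : ∀ (m : M) (u : I.X 0), x • u = ι m →
      ((θ (Submodule.Quotient.mk m) : I.X (0 + 1)) = I.d 0 1 u)) :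
    LinearMap.range θ = LinearMap.ker (xTorsCpxD S x I 0) := by
  have := hI.inj 0
  apply le_antisymm
  · rintro _ ⟨a, rfl⟩
    obtain ⟨m, rfl⟩ := Submodule.Quotient.mk_surjective _ a
    obtain ⟨u, hu⟩ := ModuleCat.exists_smul_eq_of_injective hx (ι m)
    rw [LinearMap.mem_ker]
    refine Subtype.ext ?_
    rw [coe_xTorsCpxD_apply, hθ m u hu]
    exact I.d_apply_d_apply _ _ _ _
  · intro v hv
    obtain ⟨u, hu⟩ := I.exists_d_eq_of_exactAt (i := 0) (hI.exact_pos _ zero_lt_one) v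
      (congrArg Subtype.val hv)
    have hxu : I.d 0 (0 + 1) (x • u) = 0 := by
      rw [map_smul, hu]
      exact mem_xTorsCpxX_iff.mp v.2
    obtain ⟨m, hm⟩ : x • u ∈ LinearMap.range ι.hom := by
      rw [hI.exact_zero]
      exact hxu
    exact ⟨Submodule.Quotient.mk m, Subtype.ext ((hθ m u hm.symm).trans hu)⟩

end IsInjRes

theorem min_inj_res_mod_element_general (S : Type u) [CommRing S]
    (M : Type u) [AddCommGroup M] [Module S M]
    (x : S) (hxS : x ∈ nonZeroDivisors S)
    (I : CochainComplex (ModuleCat.{u} S) ℤ) (ι : ModuleCat.of S M ⟶ I.X 0)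
    (hI : IsMinInjRes S (ModuleCat.of S M) I ι)
    (θ : (M ⧸ (Ideal.span {x} • (⊤ : Submodule S M))) →ₗ[S] xTorsCpxX S x I 0)
    (hθ : ∀ (m : M) (u : I.X 0), x • u = ι m →
      ((θ (Submodule.Quotient.mk m) : I.X (0 + 1)) = I.d 0 1 u)) :
    -- `θ` is injective
    Function.Injective θ ∧
    -- exactness at degree 0
    LinearMap.range θ = LinearMap.ker (xTorsCpxD S x I 0) ∧
    -- exactness in positive degrees
    (∀ i : ℤ, 0 ≤ i →
      LinearMap.range (xTorsCpxD S x I i) = LinearMap.ker (xTorsCpxD S x I (i + 1))) ∧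
    -- each term is an injective `S/(x)`-module
    (∀ i : ℤ, 0 ≤ i →
      QuotInjModule S x (xTorsCpxX S x I i)
        (Submodule.torsionBy_isTorsionBy (R := S) (M := I.X (i + 1)) (a := x))) ∧
    -- minimality: each term is an injective hull of its cycles
    (∀ i : ℤ, 0 ≤ i →
      IsEssentialSub S (LinearMap.ker (xTorsCpxD S x I i) : Submodule S (xTorsCpxX S x I i))) := by
  have hres := hI.res
  refine ⟨hres.connecting_injective hxS hθ, hres.range_connecting_eq_ker hxS hθ,
    fun i hi => ?_, fun i _ => ?_, fun i hi => ?_⟩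
  · have := hres.inj i
    exact range_xTorsCpxD_eq_ker hxS (hres.exact_pos _ (by omega)) (hres.exact_pos _ (by omega))
  · have := hres.inj (i + 1)
    have := Module.injective_module_of_injective_object S (I.X (i + 1))
    exact Module.Injective.torsionBy_quotient x
  · rw [ker_xTorsCpxD]
    exact (hI.ess (i + 1) (by omega)).comap_subtype _

/-- If `x` is a non-zerodivisor on the commutative Noetherian ring `S`
and on the `S`-module `M`, and `M → I` is a minimal injective resolution, then the
canonical induced map `M/xM → Σ¹Hom_S(S/xS, I)` is a minimal injective resolution of
`M/xM` over `S/xS`.  Here `Hom_S(S/xS, I^i)` is realized as the submodule of `x`-torsion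
elements of `I^i`, and the canonical map `θ` is characterized by
`θ(m mod xM) = ∂(u)` whenever `x•u = ι(m)`. -/
theorem min_inj_res_mod_element (S : Type u) [CommRing S] [IsNoetherianRing S]
    (M : Type u) [AddCommGroup M] [Module S M]
    (x : S) (hxS : x ∈ nonZeroDivisors S) (hxM : ∀ m : M, x • m = 0 → m = 0)
    (I : CochainComplex (ModuleCat.{u} S) ℤ) (ι : ModuleCat.of S M ⟶ I.X 0)
    (hI : IsMinInjRes S (ModuleCat.of S M) I ι)
    (θ : (M ⧸ (Ideal.span {x} • (⊤ : Submodule S M))) →ₗ[S] xTorsCpxX S x I 0)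
    (hθ : ∀ (m : M) (u : I.X 0), x • u = ι m →
      ((θ (Submodule.Quotient.mk m) : I.X (0 + 1)) = I.d 0 1 u)) :
    -- `θ` is injective
    Function.Injective θ ∧
    -- exactness at degree 0
    LinearMap.range θ = LinearMap.ker (xTorsCpxD S x I 0) ∧
    -- exactness in positive degrees
    (∀ i : ℤ, 0 ≤ i →
      LinearMap.range (xTorsCpxD S x I i) = LinearMap.ker (xTorsCpxD S x I (i + 1))) ∧
    -- each term is an injective `S/(x)`-module
    (∀ i : ℤ, 0 ≤ i →
      QuotInjModule S x (xTorsCpxX S x I i)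
        (Submodule.torsionBy_isTorsionBy (R := S) (M := I.X (i + 1)) (a := x))) ∧
    -- minimality: each term is an injective hull of its cycles
    (∀ i : ℤ, 0 ≤ i →
      IsEssentialSub S (LinearMap.ker (xTorsCpxD S x I i) : Submodule S (xTorsCpxX S x I i))) :=
  min_inj_res_mod_element_general S M x hxS I ι hI θ hθ
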